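/- Consider the double-support V-SLIP model with Hamiltonian H(q,p) = (p1² + p2²)/(2 m_h) + m_h g0 q2 + (k0/2)(L0 − L1(q))² + (k0/2)(L0 − L2(q))² and control potentials φ_i(q) = −(1/2)(L0 − L_i(q))². Write the controlled dynamics as ẋ = f(x) + g1(x) u1 + g2(x) u2 on the state x = (q, p) ∈ ℝ⁴, with drift f(x) = (∂H/∂p, −∂H/∂q) and input vector fields g_i(x) = (0, ∇_q φ_i(q)). Given C² and C¹ reference functions q2*, v* : ℝ → ℝ, define the error outputs h1(x) = q2*(q1) − q2 and h2(x) = v*(q1) − p1/m_h, and the decoupling matrix A(x) = [[L_{g1} L_f h1, L_{g2} L_f h1], [L_{g1} h2, L_{g2} h2]](x). Let κ_p, κ_d, κ_v > 0, and suppose x : [0, ∞) → ℝ⁴ is a C¹ solution of the closed-loop system with feedback (u1(t), u2(t))ᵀ = −A(x(t))⁻¹ ((L_f² h1 + κ_d L_f h1 + κ_p h1)(x(t)), (L_f h2 + κ_v h2)(x(t)))ᵀ, along which A(x(t)) is invertible. Then h1(x(t)) → 0 and d/dt [h1(x(t))] → 0 as t → ∞, and h2(x(t)) = e^{−κ_v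 t} h2(x(0)) → 0 as t → ∞. -/

import Mathlib

open Matrix Filter

/- State convention: `x : Fin 4 → ℝ` with `x 0 = q1`, `x 1 = q2`, `x 2 = p1`, `x 3 = p2`. -/

/-- Leg length `L_i(q) = sqrt((q1 - c_i)^2 + q2^2)`. -/
noncomputable def legLen (c : ℝ) (x : Fin 4 → ℝ) : ℝ :=
  Real.sqrt ((x 0 - c) ^ 2 + (x 1) ^ 2)

/-- Hamiltonian of the double-support V-SLIP model as a function of the state. -/
noncomputable def Hfun (mh g0 k0 L0 c1 c2 : ℝ) (x : Fin 4 → ℝ) : ℝ :=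
  ((x 2) ^ 2 + (x 3) ^ 2) / (2 * mh) + mh * g0 * x 1
    + k0 / 2 * (L0 - legLen c1 x) ^ 2 + k0 / 2 * (L0 - legLen c2 x) ^ 2

/-- Control potential `φ_i(q) = -(1/2)(L0 - L_i(q))^2`. -/
noncomputable def phiPot (c L0 : ℝ) (x : Fin 4 → ℝ) : ℝ :=
  -(1 / 2) * (L0 - legLen c x) ^ 2

/-- The drift vector field `f(x) = (∂H/∂p, -∂H/∂q)`. -/
noncomputable def fDrift (mh g0 k0 L0 c1 c2 : ℝ) (x : Fin 4 → ℝ) : Fin 4 → ℝ :=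
  ![fderiv ℝ (Hfun mh g0 k0 L0 c1 c2) x (Pi.single 2 1),
    fderiv ℝ (Hfun mh g0 k0 L0 c1 c2) x (Pi.single 3 1),
    -fderiv ℝ (Hfun mh g0 k0 L0 c1 c2) x (Pi.single 0 1),
    -fderiv ℝ (Hfun mh g0 k0 L0 c1 c2) x (Pi.single 1 1)]

/-- The input vector field `g_i(x) = (0, ∇_q φ_i(q))`. -/
noncomputable def gInput (c L0 : ℝ) (x : Fin 4 → ℝ) : Fin 4 → ℝ :=
  ![0, 0, fderiv ℝ (phiPot c L0) x (Pi.single 0 1),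
    fderiv ℝ (phiPot c L0) x (Pi.single 1 1)]

/-- Height error output `h1(x) = q2*(q1) - q2`. -/
noncomputable def h1err (q2star : ℝ → ℝ) (x : Fin 4 → ℝ) : ℝ := q2star (x 0) - x 1

/-- Forward-velocity error output `h2(x) = v*(q1) - p1/m_h`. -/
noncomputable def h2err (mh : ℝ) (vstar : ℝ → ℝ) (x : Fin 4 → ℝ) : ℝ :=
  vstar (x 0) - x 2 / mh

/-- `L_f h1`. -/
noncomputable def Lfh1 (mh g0 k0 L0 c1 c2 : ℝ) (q2star : ℝ → ℝ) (x : Fin 4 → ℝ) : ℝ :=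
  fderiv ℝ (h1err q2star) x (fDrift mh g0 k0 L0 c1 c2 x)

/-- The double-support decoupling matrix
`A(x) = [[L_{g1} L_f h1, L_{g2} L_f h1], [L_{g1} h2, L_{g2} h2]]`. -/
noncomputable def Amat (mh g0 k0 L0 c1 c2 : ℝ) (q2star vstar : ℝ → ℝ) (x : Fin 4 → ℝ) :
    Matrix (Fin 2) (Fin 2) ℝ :=
  !![fderiv ℝ (Lfh1 mh g0 k0 L0 c1 c2 q2star) x (gInput c1 L0 x),
     fderiv ℝ (Lfh1 mh g0 k0 L0 c1 c2 q2star) x (gInput c2 L0 x);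
     fderiv ℝ (h2err mh vstar) x (gInput c1 L0 x),
     fderiv ℝ (h2err mh vstar) x (gInput c2 L0 x)]

/-- The decoupling feedback
`u = -A(x)⁻¹ (L_f² h1 + κ_d L_f h1 + κ_p h1, L_f h2 + κ_v h2)ᵀ`. -/
noncomputable def uFb (mh g0 k0 L0 c1 c2 κp κd κv : ℝ) (q2star vstar : ℝ → ℝ)
    (x : Fin 4 → ℝ) : Fin 2 → ℝ :=
  -((Amat mh g0 k0 L0 c1 c2 q2star vstar x)⁻¹ *ᵥ
    ![fderiv ℝ (Lfh1 mh g0 k0 L0 c1 c2 q2star) x (fDrift mh g0 k0 L0 c1 c2 x)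
        + κd * Lfh1 mh g0 k0 L0 c1 c2 q2star x + κp * h1err q2star x,
      fderiv ℝ (h2err mh vstar) x (fDrift mh g0 k0 L0 c1 c2 x)
        + κv * h2err mh vstar x])

/-!
The feedback solves `A(x) u = -(L_f² h1 + κd L_f h1 + κp h1, L_f h2 + κv h2)`, so along the
closed loop `ḣ2 = -κv h2`, and, since `h1` depends only on `q`, on which the inputs do not act,
`ḣ1 = L_f h1` and `ḧ1 + κd ḣ1 + κp h1 = 0`. The first equation is solved by Grönwall's uniqueness
argument; for the damped oscillator a quadratic Lyapunov function decays exponentially. The only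
analytic input from the model is that `H` is smooth away from the contact points, which makes
`L_f h1` differentiable along the solution.
-/
open Set Real Topology

lemma le_mul_exp_of_hasDerivAt_le {f f' : ℝ → ℝ} {K : ℝ}
    (hf : ∀ t ≥ 0, HasDerivAt f (f' t) t) (bound : ∀ t ≥ 0, f' t ≤ K * f t)
    {t : ℝ} (ht : 0 ≤ t) : f t ≤ f 0 * exp (K * t) := by
  have := le_gronwallBound_of_liminf_deriv_right_le (ε := 0) (b := t)
    (fun s hs => (hf s hs.1).continuousAt.continuousWithinAt)
    (fun s hs _ hr => (hf s hs.1).hasDerivWithinAt.liminf_right_slope_le hr)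
    le_rfl (fun s (hs : s ∈ Ico 0 t) => by simpa using bound s hs.1) t ⟨ht, le_rfl⟩
  simpa [gronwallBound_ε0] using this

lemma eq_exp_mul_of_hasDerivAt_eq_mul {f : ℝ → ℝ} {a : ℝ}
    (hf : ∀ t ≥ 0, HasDerivAt f (a * f t) t) {t : ℝ} (ht : 0 ≤ t) :
    f t = exp (a * t) * f 0 := by
  set g := fun s => f s - exp (a * s) * f 0
  have hg : ∀ s ≥ 0, HasDerivAt g (a * g s) s := fun s hs => by
    refine ((hf s hs).sub ((((hasDerivAt_id s).const_mul a).exp).mul_const (f 0))).congr_deriv ?_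
    simp only [g, id]
    ring
  have hg_zero := eq_zero_of_abs_deriv_le_mul_abs_self_of_eq_zero_right (K := |a|) (b := t)
    (fun s hs => (hg s hs.1).continuousAt.continuousWithinAt)
    (fun s hs => (hg s hs.1).hasDerivWithinAt) (by simp [g])
    (fun s _ => (norm_mul a (g s)).le) t ⟨ht, le_rfl⟩
  exact sub_eq_zero.1 hg_zero

lemma tendsto_mul_exp_neg_mul_atTop_nhds_zero {c : ℝ} (hc : 0 < c) (C : ℝ) :
    Tendsto (fun t => C * exp (-c * t)) atTop (𝓝 0) := by
  simpa using (tendsto_exp_neg_atTop_nhds_zero.comp (tendsto_id.const_mul_atTop hc)).const_mul C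

lemma tendsto_zero_of_sq_le {α : Type*} {l : Filter α} {f g : α → ℝ}
    (hg : Tendsto g l (𝓝 0)) (hfg : ∀ᶠ t in l, f t ^ 2 ≤ g t) : Tendsto f l (𝓝 0) := by
  have hsq : Tendsto (fun t => f t ^ 2) l (𝓝 0) :=
    squeeze_zero' (Eventually.of_forall fun t => sq_nonneg (f t)) hfg hg
  have habs := hsq.sqrt
  simp only [sqrt_sq_eq_abs, Real.sqrt_zero] at habs
  exact (tendsto_zero_iff_abs_tendsto_zero f).2 habs

/-- Lyapunov function of `y'' + κd y' + κp y = 0` in the variables `(y, z = y')`: its derivative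
along solutions is `-κd (κp y² + z²)`, with no cross term. -/
noncomputable def dampedEnergy (κp κd y z : ℝ) : ℝ :=
  (z + κd / 2 * y) ^ 2 + (κp + κd ^ 2 / 4) * y ^ 2

lemma dampedEnergy_le {κp : ℝ} (hκp : 0 < κp) (κd y z : ℝ) :
    dampedEnergy κp κd y z ≤ (3 / 2 + κd ^ 2 / κp) * (κp * y ^ 2 + z ^ 2) := by
  have hc : 0 ≤ κd ^ 2 / κp := by positivity
  have hexpand : (3 / 2 + κd ^ 2 / κp) * (κp * y ^ 2 + z ^ 2)
      = 3 / 2 * κp * y ^ 2 + κd ^ 2 * y ^ 2 + 3 / 2 * z ^ 2 + κd ^ 2 / κp * z ^ 2 := by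
    field_simp
    ring
  rw [hexpand, dampedEnergy]
  nlinarith [sq_nonneg (κd * y - z), mul_nonneg hc (sq_nonneg z)]

lemma mul_sq_le_dampedEnergy {κp : ℝ} (κd y z : ℝ) : κp * y ^ 2 ≤ dampedEnergy κp κd y z := by
  unfold dampedEnergy
  nlinarith [sq_nonneg (z + κd / 2 * y), sq_nonneg (κd * y)]

lemma sq_le_two_mul_dampedEnergy {κp : ℝ} (hκp : 0 ≤ κp) (κd y z : ℝ) :
    z ^ 2 ≤ 2 * dampedEnergy κp κd y z := by
  unfold dampedEnergy
  nlinarith [sq_nonneg (z + κd * y), mul_nonneg hκp (sq_nonneg y)]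

lemma dampedEnergy_le_mul_exp {κp κd : ℝ} (hκp : 0 < κp) (hκd : 0 ≤ κd) {y z : ℝ → ℝ}
    (hy : ∀ t ≥ 0, HasDerivAt y (z t) t)
    (hz : ∀ t ≥ 0, HasDerivAt z (-(κd * z t + κp * y t)) t) {t : ℝ} (ht : 0 ≤ t) :
    dampedEnergy κp κd (y t) (z t)
      ≤ dampedEnergy κp κd (y 0) (z 0) * exp (-(κd / (3 / 2 + κd ^ 2 / κp)) * t) := by
  set V := fun t => dampedEnergy κp κd (y t) (z t)
  set K := 3 / 2 + κd ^ 2 / κp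
  have hK : 0 < K := by positivity
  have hV : ∀ t ≥ 0, HasDerivAt V (-κd * (κp * y t ^ 2 + z t ^ 2)) t := fun t ht => by
    refine ((((hz t ht).add ((hy t ht).const_mul (κd / 2))).pow 2).add
      (((hy t ht).pow 2).const_mul (κp + κd ^ 2 / 4))).congr_deriv ?_
    norm_num
    ring
  refine le_mul_exp_of_hasDerivAt_le hV (fun s _ => ?_) ht
  have hVs : V s ≤ K * (κp * y s ^ 2 + z s ^ 2) := dampedEnergy_le hκp κd (y s) (z s)
  rw [neg_mul, neg_mul, neg_le_neg_iff, div_mul_eq_mul_div, div_le_iff₀ hK]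
  nlinarith [mul_le_mul_of_nonneg_left hVs hκd]

theorem tendsto_zero_of_damped_oscillator {κp κd : ℝ} (hκp : 0 < κp) (hκd : 0 < κd)
    {y z : ℝ → ℝ} (hy : ∀ t ≥ 0, HasDerivAt y (z t) t)
    (hz : ∀ t ≥ 0, HasDerivAt z (-(κd * z t + κp * y t)) t) :
    Tendsto y atTop (𝓝 0) ∧ Tendsto z atTop (𝓝 0) := by
  set V := fun t => dampedEnergy κp κd (y t) (z t)
  have hV_nonneg : ∀ t, 0 ≤ V t := fun t =>
    (mul_sq_le_dampedEnergy κd _ _).trans' (by positivity)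
  have hV : Tendsto V atTop (𝓝 0) :=
    squeeze_zero' (Eventually.of_forall hV_nonneg)
      (eventually_ge_atTop 0 |>.mono fun t ht => dampedEnergy_le_mul_exp hκp hκd.le hy hz ht)
      (tendsto_mul_exp_neg_mul_atTop_nhds_zero (by positivity) _)
  refine ⟨tendsto_zero_of_sq_le (by simpa using hV.const_mul κp⁻¹)
      (Eventually.of_forall fun t => ?_),
    tendsto_zero_of_sq_le (by simpa using hV.const_mul 2)
      (Eventually.of_forall fun t => sq_le_two_mul_dampedEnergy hκp.le κd _ _)⟩
  rw [le_inv_mul_iff₀ hκp]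
  exact mul_sq_le_dampedEnergy κd _ _

noncomputable def closedLoopField (mh g0 k0 L0 c1 c2 κp κd κv : ℝ) (q2star vstar : ℝ → ℝ)
    (x : Fin 4 → ℝ) : Fin 4 → ℝ :=
  fDrift mh g0 k0 L0 c1 c2 x
    + uFb mh g0 k0 L0 c1 c2 κp κd κv q2star vstar x 0 • gInput c1 L0 x
    + uFb mh g0 k0 L0 c1 c2 κp κd κv q2star vstar x 1 • gInput c2 L0 x

section VSLIP

variable {mh g0 k0 L0 c1 c2 κp κd κv : ℝ} {q2star vstar : ℝ → ℝ} {y : Fin 4 → ℝ}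

lemma contDiffAt_legLen {n : WithTop ℕ∞} {c : ℝ} (hy : 0 < legLen c y) :
    ContDiffAt ℝ n (legLen c) y :=
  ContDiffAt.sqrt (by fun_prop) (Real.sqrt_pos.1 hy).ne'

lemma contDiffAt_Hfun {n : WithTop ℕ∞} (h1 : 0 < legLen c1 y) (h2 : 0 < legLen c2 y) :
    ContDiffAt ℝ n (Hfun mh g0 k0 L0 c1 c2) y := by
  have := contDiffAt_legLen (n := n) h1
  have := contDiffAt_legLen (n := n) h2
  unfold Hfun
  fun_prop

lemma differentiableAt_fDrift (h1 : 0 < legLen c1 y) (h2 : 0 < legLen c2 y) :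
    DifferentiableAt ℝ (fDrift mh g0 k0 L0 c1 c2) y := by
  have hH : DifferentiableAt ℝ (fderiv ℝ (Hfun mh g0 k0 L0 c1 c2)) y :=
    ((contDiffAt_Hfun (n := 2) h1 h2).fderiv_right (m := 1) le_rfl).differentiableAt one_ne_zero
  have hpartial (i : Fin 4) :
      DifferentiableAt ℝ (fun y => fderiv ℝ (Hfun mh g0 k0 L0 c1 c2) y (Pi.single i 1)) y :=
    hH.clm_apply (differentiableAt_const _)
  refine differentiableAt_pi.2 fun i => ?_
  fin_cases i
  · exact hpartial 2
  · exact hpartial 3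
  · exact (hpartial 0).neg
  · exact (hpartial 1).neg

lemma contDiff_h1err {n : WithTop ℕ∞} (hq : ContDiff ℝ n q2star) :
    ContDiff ℝ n (h1err q2star) := by
  unfold h1err
  fun_prop

lemma differentiable_h2err (hv : Differentiable ℝ vstar) :
    Differentiable ℝ (h2err mh vstar) := by
  unfold h2err
  fun_prop

lemma differentiableAt_Lfh1 (hq : ContDiff ℝ 2 q2star)
    (h1 : 0 < legLen c1 y) (h2 : 0 < legLen c2 y) :
    DifferentiableAt ℝ (Lfh1 mh g0 k0 L0 c1 c2 q2star) y :=
  ((((contDiff_h1err hq).fderiv_right (m := 1) le_rfl).differentiable one_ne_zero) y).clm_apply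
    (differentiableAt_fDrift h1 h2)

lemma fderiv_h1err_gInput {c : ℝ} (hq : DifferentiableAt ℝ q2star (y 0)) :
    fderiv ℝ (h1err q2star) y (gInput c L0 y) = 0 := by
  have hd : DifferentiableAt ℝ (h1err q2star) y := by
    unfold h1err
    fun_prop
  have hconst : (fun s : ℝ => h1err q2star (y + s • gInput c L0 y)) = fun _ => h1err q2star y := by
    funext s
    simp [h1err, gInput]
  rw [← hd.lineDeriv_eq_fderiv, lineDeriv, hconst, deriv_const]

lemma Amat_mulVec_uFb (hA : IsUnit (Amat mh g0 k0 L0 c1 c2 q2star vstar y)) :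
    Amat mh g0 k0 L0 c1 c2 q2star vstar y *ᵥ uFb mh g0 k0 L0 c1 c2 κp κd κv q2star vstar y =
      -![fderiv ℝ (Lfh1 mh g0 k0 L0 c1 c2 q2star) y (fDrift mh g0 k0 L0 c1 c2 y)
          + κd * Lfh1 mh g0 k0 L0 c1 c2 q2star y + κp * h1err q2star y,
        fderiv ℝ (h2err mh vstar) y (fDrift mh g0 k0 L0 c1 c2 y) + κv * h2err mh vstar y] := by
  rw [uFb, mulVec_neg, mulVec_mulVec, mul_nonsing_inv _ ((isUnit_iff_isUnit_det _).1 hA),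
    one_mulVec]

lemma fderiv_h1err_closedLoopField (hq : DifferentiableAt ℝ q2star (y 0)) :
    fderiv ℝ (h1err q2star) y (closedLoopField mh g0 k0 L0 c1 c2 κp κd κv q2star vstar y) =
      Lfh1 mh g0 k0 L0 c1 c2 q2star y := by
  simp only [closedLoopField, map_add, map_smul, fderiv_h1err_gInput hq, smul_eq_mul, mul_zero,
    add_zero, Lfh1]

lemma fderiv_Lfh1_closedLoopField (hA : IsUnit (Amat mh g0 k0 L0 c1 c2 q2star vstar y)) :
    fderiv ℝ (Lfh1 mh g0 k0 L0 c1 c2 q2star) y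
        (closedLoopField mh g0 k0 L0 c1 c2 κp κd κv q2star vstar y) =
      -(κd * Lfh1 mh g0 k0 L0 c1 c2 q2star y + κp * h1err q2star y) := by
  have h := congrFun (Amat_mulVec_uFb (κp := κp) (κd := κd) (κv := κv) hA) 0
  simp only [mulVec, dotProduct, Amat, Fin.sum_univ_two, of_apply, cons_val', cons_val_fin_one,
    cons_val_zero, cons_val_one, Pi.neg_apply] at h
  simp only [closedLoopField, map_add, map_smul, smul_eq_mul]
  linarith

lemma fderiv_h2err_closedLoopField (hA : IsUnit (Amat mh g0 k0 L0 c1 c2 q2star vstar y)) :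
    fderiv ℝ (h2err mh vstar) y (closedLoopField mh g0 k0 L0 c1 c2 κp κd κv q2star vstar y) =
      -κv * h2err mh vstar y := by
  have h := congrFun (Amat_mulVec_uFb (κp := κp) (κd := κd) (κv := κv) hA) 1
  simp only [mulVec, dotProduct, Amat, Fin.sum_univ_two, of_apply, cons_val', cons_val_fin_one,
    cons_val_zero, cons_val_one, Pi.neg_apply] at h
  simp only [closedLoopField, map_add, map_smul, smul_eq_mul]
  linarith

end VSLIP

theorem stmt18_general (mh g0 k0 L0 c1 c2 κp κd κv : ℝ)
    (hκp : 0 < κp) (hκd : 0 < κd) (hκv : 0 < κv)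
    (q2star vstar : ℝ → ℝ) (hq2star : ContDiff ℝ 2 q2star) (hvstar : ContDiff ℝ 1 vstar)
    (x : ℝ → (Fin 4 → ℝ))
    (hL1pos : ∀ t ≥ (0 : ℝ), 0 < legLen c1 (x t))
    (hL2pos : ∀ t ≥ (0 : ℝ), 0 < legLen c2 (x t))
    (hAinv : ∀ t ≥ (0 : ℝ), IsUnit (Amat mh g0 k0 L0 c1 c2 q2star vstar (x t)))
    (hx : ∀ t ≥ (0 : ℝ), HasDerivAt x
      (fDrift mh g0 k0 L0 c1 c2 (x t)
        + uFb mh g0 k0 L0 c1 c2 κp κd κv q2star vstar (x t) 0 • gInput c1 L0 (x t)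
        + uFb mh g0 k0 L0 c1 c2 κp κd κv q2star vstar (x t) 1 • gInput c2 L0 (x t)) t) :
    Tendsto (fun t => h1err q2star (x t)) atTop (nhds 0) ∧
    Tendsto (deriv (fun t => h1err q2star (x t))) atTop (nhds 0) ∧
    (∀ t ≥ (0 : ℝ), h2err mh vstar (x t) = Real.exp (-κv * t) * h2err mh vstar (x 0)) ∧
    Tendsto (fun t => h2err mh vstar (x t)) atTop (nhds 0) := by
  have hh1 : ∀ t ≥ 0, HasDerivAt (fun s => h1err q2star (x s))
      (Lfh1 mh g0 k0 L0 c1 c2 q2star (x t)) t := fun t ht => by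
    rw [← fderiv_h1err_closedLoopField (hq2star.differentiable (by norm_num) _)]
    exact ((contDiff_h1err hq2star).differentiable (by norm_num) _).hasFDerivAt.comp_hasDerivAt t
      (hx t ht)
  have hLfh1 : ∀ t ≥ 0, HasDerivAt (fun s => Lfh1 mh g0 k0 L0 c1 c2 q2star (x s))
      (-(κd * Lfh1 mh g0 k0 L0 c1 c2 q2star (x t) + κp * h1err q2star (x t))) t := fun t ht => by
    rw [← fderiv_Lfh1_closedLoopField (hAinv t ht)]
    exact (differentiableAt_Lfh1 hq2star (hL1pos t ht) (hL2pos t ht)).hasFDerivAt.comp_hasDerivAt t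
      (hx t ht)
  have hh2 : ∀ t ≥ 0, HasDerivAt (fun s => h2err mh vstar (x s))
      (-κv * h2err mh vstar (x t)) t := fun t ht => by
    rw [← fderiv_h2err_closedLoopField (hAinv t ht)]
    exact (differentiable_h2err (hvstar.differentiable one_ne_zero) _).hasFDerivAt.comp_hasDerivAt t
      (hx t ht)
  have hh2_eq : ∀ t ≥ 0, h2err mh vstar (x t) = exp (-κv * t) * h2err mh vstar (x 0) :=
    fun t ht => eq_exp_mul_of_hasDerivAt_eq_mul hh2 ht
  obtain ⟨hh1_lim, hLfh1_lim⟩ := tendsto_zero_of_damped_oscillator hκp hκd hh1 hLfh1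
  refine ⟨hh1_lim, hLfh1_lim.congr' ?_, hh2_eq, ?_⟩
  · filter_upwards [eventually_ge_atTop 0] with t ht using (hh1 t ht).deriv.symm
  · refine (tendsto_mul_exp_neg_mul_atTop_nhds_zero hκv (h2err mh vstar (x 0))).congr' ?_
    filter_upwards [eventually_ge_atTop 0] with t ht
    rw [hh2_eq t ht, mul_comm]

/-- Double-support case of Proposition 1: along any C¹ solution of the closed-loop
double-support V-SLIP dynamics with the decoupling feedback and invertible decoupling
matrix, the height error `h1` and its time derivative converge to zero, and the
forward-velocity error satisfies `h2(x(t)) = e^{-κ_v t} h2(x(0)) → 0`. -/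
theorem stmt18 (mh g0 k0 L0 c1 c2 κp κd κv : ℝ)
    (hmh : 0 < mh) (hg : 0 < g0) (hk : 0 < k0) (hL0 : 0 < L0) (hc : c1 ≠ c2)
    (hκp : 0 < κp) (hκd : 0 < κd) (hκv : 0 < κv)
    (q2star vstar : ℝ → ℝ) (hq2star : ContDiff ℝ 2 q2star) (hvstar : ContDiff ℝ 1 vstar)
    (x : ℝ → (Fin 4 → ℝ))
    (hL1pos : ∀ t ≥ (0 : ℝ), 0 < legLen c1 (x t))
    (hL2pos : ∀ t ≥ (0 : ℝ), 0 < legLen c2 (x t))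
    (hAinv : ∀ t ≥ (0 : ℝ), IsUnit (Amat mh g0 k0 L0 c1 c2 q2star vstar (x t)))
    (hx : ∀ t ≥ (0 : ℝ), HasDerivAt x
      (fDrift mh g0 k0 L0 c1 c2 (x t)
        + uFb mh g0 k0 L0 c1 c2 κp κd κv q2star vstar (x t) 0 • gInput c1 L0 (x t)
        + uFb mh g0 k0 L0 c1 c2 κp κd κv q2star vstar (x t) 1 • gInput c2 L0 (x t)) t) :
    Tendsto (fun t => h1err q2star (x t)) atTop (nhds 0) ∧
    Tendsto (deriv (fun t => h1err q2star (x t))) atTop (nhds 0) ∧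
    (∀ t ≥ (0 : ℝ), h2err mh vstar (x t) = Real.exp (-κv * t) * h2err mh vstar (x 0)) ∧
    Tendsto (fun t => h2err mh vstar (x t)) atTop (nhds 0) :=
  stmt18_general mh g0 k0 L0 c1 c2 κp κd κv hκp hκd hκv q2star vstar hq2star hvstar x hL1pos hL2pos
    hAinv hx
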